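/- arXiv:2410.23821 — 2 statements merged into one kernel-verified Lean document; each statement's English description precedes it below -/
import Mathlib

section
/- Let (X,r) be a finite biquandle and suppose x, y ∈ X satisfy λ_x = λ_y and σ_x = σ_y. Then for every positive integer k one has λ_{kx} = λ_{ky} and σ_{kx} = σ_{ky} in the structure monoid. Consequently, if (X,r) is retractable then every cabling (X,r^{(k)}) is retractable, and having finite multipermutation level is preserved under cabling. -/
open Function

section Defs

variable {X Y : Type*}

/-- `r₁₂ = r × id` on `X³`. -/
def r12 (r : X × X → X × X) : X × X × X → X × X × X :=
  fun p => ((r (p.1, p.2.1)).1, (r (p.1, p.2.1)).2, p.2.2)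

/-- `r₂₃ = id × r` on `X³`. -/
def r23 (r : X × X → X × X) : X × X × X → X × X × X :=
  fun p => (p.1, r p.2)

/-- The Yang--Baxter (braid) equation. -/
def IsYB (r : X × X → X × X) : Prop :=
  (r12 r) ∘ (r23 r) ∘ (r12 r) = (r23 r) ∘ (r12 r) ∘ (r23 r)

/-- The solution map `r(x,y) = (λ_x(y), ρ_y(x))` built from `λ` and `ρ`. -/
def rMap (lam : X → Equiv.Perm X) (rho : X → X → X) : X × X → X × X :=
  fun p => (lam p.1 p.2, rho p.2 p.1)

/-- `(X, r)` with `r(x,y) = (λ_x(y), ρ_y(x))` is a bijective non-degenerate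
set-theoretic solution of the Yang--Baxter equation. -/
def IsSolution (lam : X → Equiv.Perm X) (rho : X → X → X) : Prop :=
  IsYB (rMap lam rho) ∧ Bijective (rMap lam rho) ∧ ∀ y, Bijective (rho y)

/-- The (left) derived operation `σ_y(x) = x ◁ y = λ_y(ρ_{λ_x⁻¹(y)}(x))`. -/
def sigMap (lam : X → Equiv.Perm X) (rho : X → X → X) (y : X) : X → X :=
  fun x => lam y (rho ((lam x).symm y) x)

/-- A biquandle: a solution whose derived rack is a quandle. -/
def IsBiquandle (lam : X → Equiv.Perm X) (rho : X → X → X) : Prop :=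
  IsSolution lam rho ∧ ∀ x, sigMap lam rho x x = x

/-- The diagonal map `q(x) = λ_x⁻¹(x)`. -/
def qMap (lam : X → Equiv.Perm X) : X → X := fun x => (lam x).symm x

/-- `λ` of the `k`-th additive multiple: `λ_{kx}` restricted to `X`,
computed via `kx = x ∘ q(x) ∘ ⋯ ∘ q^{k-1}(x)` and `λ_{a∘b} = λ_a λ_b`. -/
def lamCab (lam : X → Equiv.Perm X) : ℕ → X → Equiv.Perm X
  | 0, _ => 1
  | k+1, x => lam x * lamCab lam k (qMap lam x)

/-- `σ` of the `k`-th additive multiple: `σ_{ky} = σ_y^k` restricted to `X`. -/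
def sigCab (lam : X → Equiv.Perm X) (rho : X → X → X) (k : ℕ) (y : X) : X → X :=
  (sigMap lam rho y)^[k]

/-- `ρ` of the `k`-cabled solution, via `ρ_b(a) = λ_{λ_a(b)}⁻¹ σ_{λ_a(b)}(a)`. -/
def rhoCab (lam : X → Equiv.Perm X) (rho : X → X → X) (k : ℕ) (y x : X) : X :=
  (lamCab lam k (lamCab lam k x y)).symm (sigCab lam rho k (lamCab lam k x y) x)

/-- The `k`-cabled solution `r^{(k)}`. -/
def rCab (lam : X → Equiv.Perm X) (rho : X → X → X) (k : ℕ) : X × X → X × X :=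
  rMap (lamCab lam k) (rhoCab lam rho k)

/-- `f` is a morphism of solutions `(X,r) → (Y,s)`. -/
def IsMor (r : X × X → X × X) (s : Y × Y → Y × Y) (f : X → Y) : Prop :=
  ∀ p, Prod.map f f (r p) = s (Prod.map f f p)

/-- `(X,r)` is `n`-decomposable: a partition into `n` nonempty subsolutions
`X_1, …, X_n` with `r(X_i × X_j) = X_j × X_i`. -/
def NDecomp (r : X × X → X × X) (n : ℕ) : Prop :=
  ∃ P : Fin n → Set X, (∀ i, (P i).Nonempty) ∧
    (∀ i j, i ≠ j → Disjoint (P i) (P j)) ∧ (⋃ i, P i) = Set.univ ∧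
    ∀ i j, r '' ((P i) ×ˢ (P j)) = (P j) ×ˢ (P i)

/-- `(X,r)` is decomposable: a partition `X = Y ⊔ Z` into nonempty parts with
`r(Y×Y) ⊆ Y×Y` and `r(Z×Z) ⊆ Z×Z`. -/
def Decomposable (r : X × X → X × X) : Prop :=
  ∃ A B : Set X, A.Nonempty ∧ B.Nonempty ∧ Disjoint A B ∧ A ∪ B = Set.univ ∧
    r '' (A ×ˢ A) ⊆ A ×ˢ A ∧ r '' (B ×ˢ B) ⊆ B ×ˢ B

/-- A solution is simple if every epimorphic image is isomorphic to it or a singleton. -/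
def SimpleSol {X : Type u} (r : X × X → X × X) : Prop :=
  ∀ (Z : Type u) (s : Z × Z → Z × Z) (f : X → Z),
    Surjective f → IsMor r s f → Bijective f ∨ Subsingleton Z

/-- The image in `Perm X` of the group `S(X,r) = ⟨σ_x⁻¹ : x ∈ X⟩ ⋊ 𝒢(X,r)`
acting on `X` via `(σ_a⁻¹, λ_b, ρ_b⁻¹) · x = σ_a⁻¹ λ_b (x)`:
the subgroup of `Perm X` generated by all `σ_x` and `λ_x`. -/
def permGroupOf (lam : X → Equiv.Perm X) (rho : X → X → X) : Subgroup (Equiv.Perm X) :=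
  Subgroup.closure {g : Equiv.Perm X | (∃ y, ⇑g = sigMap lam rho y) ∨ ∃ y, g = lam y}

/-- Relations `x ∘ y = l(x,y) ∘ ρ(y,x)` defining a structure group. -/
def relsOf (l ρ : X → X → X) : Set (FreeGroup X) :=
  {w | ∃ x y : X, w = FreeGroup.of x * FreeGroup.of y *
      (FreeGroup.of (l x y) * FreeGroup.of (ρ y x))⁻¹}

end Defs

/-- `(X,r)` is retractable: the retraction identifies at least two elements. -/
def Retractable {X : Type*} (lam : X → Equiv.Perm X) (rho : X → X → X) : Prop :=
  ∃ x y : X, x ≠ y ∧ lam x = lam y ∧ sigMap lam rho x = sigMap lam rho y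

/-- The kernel relation of the `n`-fold iterated retraction. -/
def retIter {X : Type*} (lam : X → Equiv.Perm X) (rho : X → X → X) : ℕ → X → X → Prop
  | 0 => Eq
  | n+1 => fun x y => ∀ z, retIter lam rho n (lam x z) (lam y z) ∧
      retIter lam rho n (sigMap lam rho x z) (sigMap lam rho y z)

/-- `(X,r)` has finite multipermutation level: some iterated retract is a singleton. -/
def FiniteMPL {X : Type*} (lam : X → Equiv.Perm X) (rho : X → X → X) : Prop :=
  ∃ n : ℕ, ∀ x y : X, retIter lam rho n x y

namespace YBAux

open Function Equiv

variable {X : Type*}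

/-- pointwise YB components -/
theorem yb1 {lam : X → Equiv.Perm X} {rho : X → X → X} (h : IsYB (rMap lam rho)) :
    ∀ x y z, lam (lam x y) (lam (rho y x) z) = lam x (lam y z) := by
  intro x y z
  have := congrFun h (x, y, z)
  simp only [Function.comp, r12, r23, rMap, Prod.mk.injEq] at this
  exact this.1

theorem yb2 {lam : X → Equiv.Perm X} {rho : X → X → X} (h : IsYB (rMap lam rho)) :
    ∀ x y z, rho (lam (rho y x) z) (lam x y) = lam (rho (lam y z) x) (rho z y) := by
  intro x y z
  have := congrFun h (x, y, z)
  simp only [Function.comp, r12, r23, rMap, Prod.mk.injEq] at this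
  exact this.2.1

theorem yb3 {lam : X → Equiv.Perm X} {rho : X → X → X} (h : IsYB (rMap lam rho)) :
    ∀ x y z, rho z (rho y x) = rho (rho z y) (rho (lam y z) x) := by
  intro x y z
  have := congrFun h (x, y, z)
  simp only [Function.comp, r12, r23, rMap, Prod.mk.injEq] at this
  exact this.2.2

/-- σ in terms of ρ -/
theorem sig_def (lam : X → Equiv.Perm X) (rho : X → X → X) (y x : X) :
    sigMap lam rho y x = lam y (rho ((lam x).symm y) x) := rfl

theorem rho_eq_sig (lam : X → Equiv.Perm X) (rho : X → X → X) (y x : X) :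
    rho ((lam x).symm y) x = (lam y).symm (sigMap lam rho y x) := by
  simp [sigMap]

/-- (★): λ_x λ_{λ_x⁻¹ d} = λ_d λ_{λ_d⁻¹ σ_d x} -/
theorem star_id {lam : X → Equiv.Perm X} {rho : X → X → X} (h : IsYB (rMap lam rho)) :
    ∀ x d w, lam x (lam ((lam x).symm d) w)
      = lam d (lam ((lam d).symm (sigMap lam rho d x)) w) := by
  intro x d w
  have h1 := yb1 h x ((lam x).symm d) w
  rw [Equiv.apply_symm_apply] at h1
  rw [← h1, ← rho_eq_sig]

/-- (L): σ_{λ_a c} (λ_a w) = λ_a (σ_c w) -/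
theorem LL_id {lam : X → Equiv.Perm X} {rho : X → X → X} (h : IsYB (rMap lam rho)) :
    ∀ a c w, sigMap lam rho (lam a c) (lam a w) = lam a (sigMap lam rho c w) := by
  intro a c w
  -- step A : (lam (lam a w)).symm (lam a c) = lam (rho w a) ((lam w).symm c)
  have hA : (lam (lam a w)).symm (lam a c) = lam (rho w a) ((lam w).symm c) := by
    have h1 := yb1 h a w ((lam w).symm c)
    rw [Equiv.apply_symm_apply] at h1
    rw [← h1, Equiv.symm_apply_apply]
  have hB := yb2 h a w ((lam w).symm c)
  rw [Equiv.apply_symm_apply] at hB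
  have hC := yb1 h a c (rho ((lam w).symm c) w)
  calc sigMap lam rho (lam a c) (lam a w)
      = lam (lam a c) (rho ((lam (lam a w)).symm (lam a c)) (lam a w)) := rfl
    _ = lam (lam a c) (rho (lam (rho w a) ((lam w).symm c)) (lam a w)) := by rw [hA]
    _ = lam (lam a c) (lam (rho c a) (rho ((lam w).symm c) w)) := by rw [hB]
    _ = lam a (lam c (rho ((lam w).symm c) w)) := hC
    _ = lam a (sigMap lam rho c w) := rfl

end YBAux
namespace YBAux
variable {X : Type*}

/-- transport: lam (rho u x) t = (lam (lam x u)).symm (lam x (lam u t)) -/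
theorem lam_rho_transport {lam : X → Equiv.Perm X} {rho : X → X → X}
    (h : IsYB (rMap lam rho)) (x u t : X) :
    lam (rho u x) t = (lam (lam x u)).symm (lam x (lam u t)) := by
  rw [← yb1 h x u t, Equiv.symm_apply_apply]

/-- self-distributivity: σ_a σ_b x = σ_{σ_a b} (σ_a x) -/
theorem sig_sd {lam : X → Equiv.Perm X} {rho : X → X → X} (h : IsYB (rMap lam rho)) :
    ∀ a b x, sigMap lam rho a (sigMap lam rho b x)
      = sigMap lam rho (sigMap lam rho a b) (sigMap lam rho a x) := by
  intro a b x
  set S := sigMap lam rho with hS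
  set u := (lam x).symm b with hu
  set ν := (lam x).symm a with hν
  set ζ := (lam u).symm ν with hζ
  set y := rho ν x with hy
  set m := (lam a).symm (S a b) with hm
  have hxu : lam x u = b := Equiv.apply_symm_apply _ _
  have hxν : lam x ν = a := Equiv.apply_symm_apply _ _
  have huζ : lam u ζ = ν := Equiv.apply_symm_apply _ _
  -- sub2a
  have sub2a : (lam (rho u x)).symm ((lam b).symm a) = ζ := by
    apply (lam (rho u x)).injective
    rw [Equiv.apply_symm_apply, lam_rho_transport h x u ζ, hxu, huζ, hxν]
  -- (i')
  have hmval : m = rho ((lam b).symm a) b := by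
    have : S a b = lam a (rho ((lam b).symm a) b) := rfl
    rw [hm, this, Equiv.symm_apply_apply]
  have hip : lam y (rho ζ u) = m := by
    have h2 := yb2 h x u ζ
    rw [huζ, hxu] at h2
    -- h2 : rho (lam (rho u x) ζ) b = lam (rho ν x) (rho ζ u)
    have : lam (rho u x) ζ = (lam b).symm a := by
      rw [← sub2a, Equiv.apply_symm_apply]
    rw [this] at h2
    rw [← hy] at h2
    rw [← h2, hmval]
  -- step1
  have step1 : S a (S b x) = lam b (S ((lam b).symm a) (rho u x)) := by
    have hLL := LL_id h b ((lam b).symm a) (rho u x)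
    rw [Equiv.apply_symm_apply] at hLL
    have : S b x = lam b (rho u x) := rfl
    rw [this, hS] at *
    exact hLL
  -- step2
  have step2 : S ((lam b).symm a) (rho u x)
      = lam ((lam b).symm a) (rho (rho ζ u) y) := by
    have : S ((lam b).symm a) (rho u x)
        = lam ((lam b).symm a) (rho ((lam (rho u x)).symm ((lam b).symm a)) (rho u x)) := rfl
    rw [this, sub2a]
    congr 1
    have h3 := yb3 h x u ζ
    rw [huζ, ← hy] at h3
    exact h3
  -- step3 via star
  have step3 : lam b (lam ((lam b).symm a) (rho (rho ζ u) y))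
      = lam a (lam m (rho (rho ζ u) y)) := by
    rw [star_id h b a (rho (rho ζ u) y)]
  -- step4
  have ham : lam a m = S a b := Equiv.apply_symm_apply _ _
  have step4 : lam a (lam m (rho (rho ζ u) y))
      = lam (S a b) (lam (rho m a) (rho (rho ζ u) y)) := by
    rw [← yb1 h a m (rho (rho ζ u) y), ham]
  -- lam a y = S a x
  have hay : lam a y = S a x := rfl
  -- step5 via yb2 at (a, y, rho ζ u)
  have step5 : lam (rho m a) (rho (rho ζ u) y)
      = rho ((lam (S a x)).symm (S a b)) (S a x) := by
    have h2 := yb2 h a y (rho ζ u)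
    rw [hip, hay] at h2
    -- h2 : rho (lam (rho y a) (rho ζ u)) (S a x) = lam (rho m a) (rho (rho ζ u) y)
    have hii : lam (rho y a) (rho ζ u) = (lam (S a x)).symm (S a b) := by
      rw [lam_rho_transport h a y (rho ζ u), hip, ham, hay]
    rw [hii] at h2
    exact h2.symm
  have final : S (S a b) (S a x)
      = lam (S a b) (rho ((lam (S a x)).symm (S a b)) (S a x)) := rfl
  rw [step1, step2, step3, step4, step5, final]

end YBAux
namespace YBAux
open Function Equiv
variable {X : Type*}

theorem sig_injective {lam : X → Equiv.Perm X} {rho : X → X → X}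
    (hinj : Injective (rMap lam rho)) (c : X) : Injective (sigMap lam rho c) := by
  intro u v huv
  have hu : rMap lam rho (u, (lam u).symm c) = (c, (lam c).symm (sigMap lam rho c u)) := by
    simp only [rMap, Equiv.apply_symm_apply, rho_eq_sig]
  have hv : rMap lam rho (v, (lam v).symm c) = (c, (lam c).symm (sigMap lam rho c v)) := by
    simp only [rMap, Equiv.apply_symm_apply, rho_eq_sig]
  have := hinj (hu.trans (huv ▸ hv.symm))
  exact (Prod.mk.injEq _ _ _ _ ▸ this).1

/-- the dual (hat) lambda -/
def hatL (lam sigE : X → Equiv.Perm X) (a : X) : Equiv.Perm X :=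
  (lam a).trans (sigE a).symm

theorem hatL_apply (lam sigE : X → Equiv.Perm X) (a x : X) :
    hatL lam sigE a x = (sigE a).symm (lam a x) := rfl

theorem hatL_symm_apply (lam sigE : X → Equiv.Perm X) (a x : X) :
    (hatL lam sigE a).symm x = (lam a).symm (sigE a x) := by
  simp [hatL]

/-- the dual rho -/
def hatR (lam sigE : X → Equiv.Perm X) (v u : X) : X :=
  (lam (hatL lam sigE u v)).symm u

section Hat
variable {lam : X → Equiv.Perm X} {rho : X → X → X} {sigE : X → Equiv.Perm X}
variable (hcoe : ∀ c, ⇑(sigE c) = sigMap lam rho c)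
include hcoe

theorem r_rhat (h : IsYB (rMap lam rho)) :
    rMap lam rho ∘ rMap (hatL lam sigE) (hatR lam sigE) = id := by
  funext p
  obtain ⟨u, v⟩ := p
  set x := hatL lam sigE u v with hx
  show rMap lam rho (rMap (hatL lam sigE) (hatR lam sigE) (u, v)) = (u, v)
  have h1 : rMap (hatL lam sigE) (hatR lam sigE) (u, v) = (x, (lam x).symm u) := rfl
  rw [h1]
  show (lam x ((lam x).symm u), rho ((lam x).symm u) x) = (u, v)
  have h2 : rho ((lam x).symm u) x = (lam u).symm (sigMap lam rho u x) := rho_eq_sig _ _ _ _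
  have h3 : sigMap lam rho u x = lam u v := by
    rw [← hcoe u, hx, hatL_apply, Equiv.apply_symm_apply]
  rw [Equiv.apply_symm_apply, h2, h3, Equiv.symm_apply_apply]

theorem rhat_r (h : IsYB (rMap lam rho)) (hinj : Injective (rMap lam rho)) :
    rMap (hatL lam sigE) (hatR lam sigE) ∘ rMap lam rho = id := by
  funext p
  apply hinj
  have := congrFun (r_rhat hcoe h) (rMap lam rho p)
  simpa using this

theorem yb_hat (h : IsYB (rMap lam rho)) (hinj : Injective (rMap lam rho)) :
    IsYB (rMap (hatL lam sigE) (hatR lam sigE)) := by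
  set r := rMap lam rho
  set rh := rMap (hatL lam sigE) (hatR lam sigE)
  have hrrh : ∀ p, r (rh p) = p := fun p => congrFun (r_rhat hcoe h) p
  have hrhr : ∀ p, rh (r p) = p := fun p => congrFun (rhat_r hcoe h hinj) p
  have hA : ∀ p, r12 r (r12 rh p) = p := by
    intro p; simp only [r12]; rw [Prod.mk.eta, hrrh]
  have hA' : ∀ p, r12 rh (r12 r p) = p := by
    intro p; simp only [r12]; rw [Prod.mk.eta, hrhr]
  have hB : ∀ p, r23 r (r23 rh p) = p := by
    intro p; simp only [r23]; rw [hrrh]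
  have hB' : ∀ p, r23 rh (r23 r p) = p := by
    intro p; simp only [r23]; rw [hrhr]
  have hyb : ∀ p, r12 r (r23 r (r12 r p)) = r23 r (r12 r (r23 r p)) := by
    intro p; exact congrFun h p
  funext p
  show r12 rh (r23 rh (r12 rh p)) = r23 rh (r12 rh (r23 rh p))
  set q := r12 rh (r23 rh (r12 rh p)) with hq
  have hp : r12 r (r23 r (r12 r q)) = p := by
    rw [hq, hA, hB, hA]
  calc r12 rh (r23 rh (r12 rh p)) = q := rfl
    _ = r23 rh (r12 rh (r23 rh p)) := by
        conv_rhs => rw [← hp, hyb, hB', hA', hB']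

omit hcoe in
theorem sigHat_eq :
    ∀ y x, sigMap (hatL lam sigE) (hatR lam sigE) y x = (sigE y).symm x := by
  intro y x
  show hatL lam sigE y (hatR lam sigE ((hatL lam sigE x).symm y) x) = _
  have : hatL lam sigE x ((hatL lam sigE x).symm y) = y := Equiv.apply_symm_apply _ _
  rw [hatR, this, hatL_apply, Equiv.apply_symm_apply]

end Hat

/-- the package of identities -/
structure IsPack (lam sigE : X → Equiv.Perm X) : Prop where
  p1 : ∀ a c w, sigE (lam a c) (lam a w) = lam a (sigE c w)
  p2 : ∀ x d w, lam x (lam ((lam x).symm d) w) = lam d (lam ((lam d).symm (sigE d x)) w)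
  p3 : ∀ a b x, sigE a (sigE b x) = sigE (sigE a b) (sigE a x)
  p4 : ∀ x, sigE x x = x
  p7 : ∀ a c w, (sigE (hatL lam sigE a c)).symm (hatL lam sigE a w)
        = hatL lam sigE a ((sigE c).symm w)
  p8 : ∀ x d w, hatL lam sigE x (hatL lam sigE ((hatL lam sigE x).symm d) w)
        = hatL lam sigE d (hatL lam sigE ((hatL lam sigE d).symm ((sigE d).symm x)) w)

theorem exists_pack [Finite X] {lam : X → Equiv.Perm X} {rho : X → X → X}
    (hbq : IsBiquandle lam rho) :
    ∃ sigE : X → Equiv.Perm X, (∀ c, ⇑(sigE c) = sigMap lam rho c) ∧ IsPack lam sigE := by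
  obtain ⟨⟨hyb, hrbij, hrho⟩, hqnd⟩ := hbq
  have hinj : Injective (rMap lam rho) := hrbij.injective
  have hsbij : ∀ c, Bijective (sigMap lam rho c) := fun c =>
    (Finite.injective_iff_bijective).mp (sig_injective hinj c)
  refine ⟨fun c => Equiv.ofBijective _ (hsbij c), fun c => rfl, ?_⟩
  set sigE : X → Equiv.Perm X := fun c => Equiv.ofBijective _ (hsbij c) with hsE
  have hcoe : ∀ c, ⇑(sigE c) = sigMap lam rho c := fun c => rfl
  have hybh := yb_hat (sigE := sigE) hcoe hyb hinj
  have hsh := sigHat_eq (lam := lam) (sigE := sigE)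
  constructor
  · exact fun a c w => LL_id hyb a c w
  · exact fun x d w => star_id hyb x d w
  · exact fun a b x => sig_sd hyb a b x
  · exact fun x => hqnd x
  · intro a c w
    have := LL_id hybh a c w
    rw [hsh, hsh] at this
    exact this
  · intro x d w
    have := star_id hybh x d w
    rw [hsh] at this
    exact this

end YBAux
namespace YBAux
open Function Equiv
variable {X : Type*}

/-- the level-1 retraction relation -/
def E1 (lam sigE : X → Equiv.Perm X) (a b : X) : Prop :=
  lam a = lam b ∧ sigE a = sigE b

theorem E1.equiv (lam sigE : X → Equiv.Perm X) : Equivalence (E1 lam sigE) :=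
  ⟨fun _ => ⟨rfl, rfl⟩, fun h => ⟨h.1.symm, h.2.symm⟩,
   fun h h' => ⟨h.1.trans h'.1, h.2.trans h'.2⟩⟩

section Compat
variable {lam sigE : X → Equiv.Perm X}

/-- formula: σ_{λ_c⁻¹ d} w = λ_c⁻¹ (σ_d (λ_c w)) -/
theorem sig_lam_symm (hp1 : ∀ a c w, sigE (lam a c) (lam a w) = lam a (sigE c w))
    (c d w : X) : sigE ((lam c).symm d) w = (lam c).symm (sigE d (lam c w)) := by
  have := hp1 c ((lam c).symm d) w
  rw [Equiv.apply_symm_apply] at this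
  rw [this, Equiv.symm_apply_apply]

/-- formula: σ_{σ_c a} u = σ_c (σ_a (σ_c⁻¹ u)) -/
theorem sig_sig (hp3 : ∀ a b x, sigE a (sigE b x) = sigE (sigE a b) (sigE a x))
    (c a u : X) : sigE (sigE c a) u = sigE c (sigE a ((sigE c).symm u)) := by
  have := hp3 c a ((sigE c).symm u)
  rw [Equiv.apply_symm_apply] at this
  exact this.symm

/-- formula: λ_{λ_c⁻¹ σ_c a} w = λ_c⁻¹ (λ_a (λ_{λ_a⁻¹ c} w)) -/
theorem lam_h_formula
    (hp2 : ∀ x d w, lam x (lam ((lam x).symm d) w) = lam d (lam ((lam d).symm (sigE d x)) w))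
    (c a w : X) :
    lam ((lam c).symm (sigE c a)) w = (lam c).symm (lam a (lam ((lam a).symm c) w)) := by
  have := hp2 a c w
  rw [this, Equiv.symm_apply_apply]

/-- the h-map preserves E1 (generic, needs only p1 p2 p3) -/
theorem hlemma_gen (hp1 : ∀ a c w, sigE (lam a c) (lam a w) = lam a (sigE c w))
    (hp2 : ∀ x d w, lam x (lam ((lam x).symm d) w) = lam d (lam ((lam d).symm (sigE d x)) w))
    (hp3 : ∀ a b x, sigE a (sigE b x) = sigE (sigE a b) (sigE a x))
    {a b : X} (hab : E1 lam sigE a b) (c : X) :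
    E1 lam sigE ((lam c).symm (sigE c a)) ((lam c).symm (sigE c b)) := by
  obtain ⟨ha, hs⟩ := hab
  constructor
  · ext w
    rw [lam_h_formula hp2, lam_h_formula hp2, ha]
  · ext w
    rw [sig_lam_symm hp1, sig_lam_symm hp1, sig_sig hp3, sig_sig hp3, hs]

/-- p3 for the hat data -/
theorem hp3_hat (hp3 : ∀ a b x, sigE a (sigE b x) = sigE (sigE a b) (sigE a x)) :
    ∀ a b x, (sigE a).symm ((sigE b).symm x)
      = (sigE ((sigE a).symm b)).symm ((sigE a).symm x) := by
  intro a b x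
  apply (sigE ((sigE a).symm b)).injective
  rw [Equiv.apply_symm_apply]
  apply (sigE a).injective
  rw [hp3 a ((sigE a).symm b) ((sigE a).symm ((sigE b).symm x))]
  simp only [Equiv.apply_symm_apply]

/-- E1 for hat data coincides with E1 -/
theorem E1_hat_iff {a b : X} :
    E1 (hatL lam sigE) (fun c => (sigE c).symm) a b ↔ E1 lam sigE a b := by
  constructor
  · rintro ⟨hl, hs⟩
    have hs' : sigE a = sigE b := by
      have := congrArg Equiv.symm hs
      simpa using this
    refine ⟨?_, hs'⟩
    ext w
    have h1 : lam a w = sigE a (hatL lam sigE a w) := by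
      rw [hatL_apply, Equiv.apply_symm_apply]
    rw [h1, hs', hl, hatL_apply, Equiv.apply_symm_apply]
  · rintro ⟨hl, hs⟩
    constructor
    · ext w; simp [hatL_apply, hl, hs]
    · simp [hs]

end Compat
end YBAux
namespace YBAux
open Function Equiv
variable {X : Type*}

section Compat2
variable {lam sigE : X → Equiv.Perm X}

/-- inverse lambda preserves E1 -/
theorem compatLamInv (hp : IsPack lam sigE) {a b : X} (hab : E1 lam sigE a b) (c : X) :
    E1 lam sigE ((lam c).symm a) ((lam c).symm b) := by
  have h := hlemma_gen hp.p7 hp.p8 (hp3_hat hp.p3) (E1_hat_iff.mpr hab) c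
  have key : ∀ t, (hatL lam sigE c).symm ((sigE c).symm t) = (lam c).symm t := by
    intro t
    rw [hatL_symm_apply, Equiv.apply_symm_apply]
  rw [key, key] at h
  exact E1_hat_iff.mp h

/-- reverse a compat property through a permutation, using finiteness -/
theorem compat_rev [Finite X] (E : X → X → Prop) (hE : Equivalence E)
    (f : Equiv.Perm X) (hf : ∀ a b, E a b → E (f a) (f b)) :
    ∀ a b, E (f a) (f b) → E a b := by
  intro a b hab
  let s : Setoid X := ⟨E, hE⟩
  let F : Quotient s → Quotient s := Quotient.map f hf
  have hsurj : Function.Surjective F := by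
    intro q
    induction q using Quotient.ind with
    | _ x => exact ⟨⟦f.symm x⟧, by simp [F, Quotient.map_mk]⟩
  have hinj : Function.Injective F := Finite.injective_iff_surjective.mpr hsurj
  have : F ⟦a⟧ = F ⟦b⟧ := Quotient.sound hab
  have := hinj this
  exact Quotient.exact this

variable [Finite X]

theorem compatLam (hp : IsPack lam sigE) {a b : X} (hab : E1 lam sigE a b) (c : X) :
    E1 lam sigE (lam c a) (lam c b) := by
  have := compat_rev (E1 lam sigE) (E1.equiv lam sigE) (lam c).symm
    (fun a b h => compatLamInv hp h c) (lam c a) (lam c b)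
  simp only [Equiv.symm_apply_apply] at this
  exact this hab

theorem compatSig (hp : IsPack lam sigE) {a b : X} (hab : E1 lam sigE a b) (c : X) :
    E1 lam sigE (sigE c a) (sigE c b) := by
  have h1 := hlemma_gen hp.p1 hp.p2 hp.p3 hab c
  have h2 := compatLam hp h1 c
  simp only [Equiv.apply_symm_apply] at h2
  exact h2

theorem compatSigInv (hp : IsPack lam sigE) {a b : X} (hab : E1 lam sigE a b) (c : X) :
    E1 lam sigE ((sigE c).symm a) ((sigE c).symm b) := by
  have := compat_rev (E1 lam sigE) (E1.equiv lam sigE) (sigE c)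
    (fun a b h => compatSig hp h c) ((sigE c).symm a) ((sigE c).symm b)
  simp only [Equiv.apply_symm_apply] at this
  exact this hab

omit [Finite X] in
/-- q preserves E1 -/
theorem qpres (hp : IsPack lam sigE) {a b : X} (hab : E1 lam sigE a b) :
    E1 lam sigE (qMap lam a) (qMap lam b) := by
  obtain ⟨ha, hs⟩ := hab
  constructor
  · -- lam (qMap a) = lam (qMap b)
    ext w
    have h2 := hp.p2 a b w
    -- lam a (lam ((lam a).symm b) w) = lam b (lam ((lam b).symm (sigE b a)) w)
    have hba : sigE b a = a := by rw [← hs, hp.p4]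
    rw [hba] at h2
    have e1 : (lam a).symm b = qMap lam b := by rw [ha]; rfl
    have e2 : (lam b).symm a = qMap lam a := by rw [← ha]; rfl
    rw [e1, e2, ha] at h2
    exact (lam b).injective h2.symm
  · ext w
    have f1 := sig_lam_symm hp.p1 a a w
    have f2 := sig_lam_symm hp.p1 b b w
    show sigE ((lam a).symm a) w = sigE ((lam b).symm b) w
    rw [f1, f2, ha, hs]

/-- E1 implies equality of cabled lambdas -/
theorem lamCab_congr (hp : IsPack lam sigE) :
    ∀ (k : ℕ) {a b : X}, E1 lam sigE a b → lamCab lam k a = lamCab lam k b := by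
  intro k
  induction k with
  | zero => intro a b _; rfl
  | succ k ih =>
    intro a b hab
    show lam a * lamCab lam k (qMap lam a) = lam b * lamCab lam k (qMap lam b)
    rw [hab.1, ih (qpres hp hab)]

end Compat2
end YBAux
namespace YBAux
open Function Equiv
variable {X : Type*}

/-- abstract retraction iteration -/
def R (L S : X → X → X) : ℕ → X → X → Prop
  | 0 => Eq
  | n+1 => fun x y => ∀ z, R L S n (L x z) (L y z) ∧ R L S n (S x z) (S y z)

theorem retIter_eq_R (lam : X → Equiv.Perm X) (rho : X → X → X) :
    ∀ n, retIter lam rho n = R (fun a z => lam a z) (sigMap lam rho) n := by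
  intro n
  induction n with
  | zero => rfl
  | succ n ih =>
    funext x y
    show (∀ z, retIter lam rho n _ _ ∧ retIter lam rho n _ _) = _
    rw [ih]
    rfl

def pSetoid (lam sigE : X → Equiv.Perm X) : Setoid X :=
  ⟨E1 lam sigE, E1.equiv lam sigE⟩

abbrev QT (lam sigE : X → Equiv.Perm X) := Quotient (pSetoid lam sigE)

def mkQ {lam sigE : X → Equiv.Perm X} : X → QT lam sigE :=
  Quotient.mk (pSetoid lam sigE)

theorem mkQ_eq_iff {lam sigE : X → Equiv.Perm X} {a b : X} :
    (mkQ a : QT lam sigE) = mkQ b ↔ E1 lam sigE a b :=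
  ⟨fun h => Quotient.exact h, fun h => Quotient.sound h⟩

section QuotDev
variable {lam sigE : X → Equiv.Perm X} [Finite X] (hp : IsPack lam sigE)

/-- a permutation descending to the quotient -/
def permQ (f : Equiv.Perm X)
    (hf : ∀ a b, E1 lam sigE a b → E1 lam sigE (f a) (f b))
    (hf' : ∀ a b, E1 lam sigE a b → E1 lam sigE (f.symm a) (f.symm b)) :
    Equiv.Perm (QT lam sigE) where
  toFun := Quotient.lift (fun z => (mkQ (f z) : QT lam sigE))
    (fun a b hab => Quotient.sound (hf a b hab))
  invFun := Quotient.lift (fun z => (mkQ (f.symm z) : QT lam sigE))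
    (fun a b hab => Quotient.sound (hf' a b hab))
  left_inv := by
    intro q
    induction q using Quotient.ind with
    | _ z => exact congrArg mkQ (f.symm_apply_apply z)
  right_inv := by
    intro q
    induction q using Quotient.ind with
    | _ z => exact congrArg mkQ (f.apply_symm_apply z)

def lamQ : QT lam sigE → Equiv.Perm (QT lam sigE) :=
  Quotient.lift
    (fun c => permQ (lam c) (fun _ _ h => compatLam hp h c) (fun _ _ h => compatLamInv hp h c))
    (by
      intro c c' hcc'
      ext q
      induction q using Quotient.ind with
      | _ z =>
        show (mkQ (lam c z) : QT lam sigE) = mkQ (lam c' z)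
        rw [hcc'.1])

def sigQ : QT lam sigE → Equiv.Perm (QT lam sigE) :=
  Quotient.lift
    (fun c => permQ (sigE c) (fun _ _ h => compatSig hp h c) (fun _ _ h => compatSigInv hp h c))
    (by
      intro c c' hcc'
      ext q
      induction q using Quotient.ind with
      | _ z =>
        show (mkQ (sigE c z) : QT lam sigE) = mkQ (sigE c' z)
        rw [hcc'.2])

theorem lamQ_mk (c z : X) : lamQ hp (mkQ c) (mkQ z) = mkQ (lam c z) := rfl
theorem lamQ_symm_mk (c z : X) : (lamQ hp (mkQ c)).symm (mkQ z) = mkQ ((lam c).symm z) := rfl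
theorem sigQ_mk (c z : X) : sigQ hp (mkQ c) (mkQ z) = mkQ (sigE c z) := rfl
theorem sigQ_symm_mk (c z : X) : (sigQ hp (mkQ c)).symm (mkQ z) = mkQ ((sigE c).symm z) := rfl

theorem packQ : IsPack (lamQ hp) (sigQ hp) := by
  constructor
  · intro a c w
    induction a using Quotient.ind with | _ a =>
    induction c using Quotient.ind with | _ c =>
    induction w using Quotient.ind with | _ w =>
    show (mkQ _ : QT lam sigE) = mkQ _
    exact congrArg mkQ (hp.p1 a c w)
  · intro x d w
    induction x using Quotient.ind with | _ x =>
    induction d using Quotient.ind with | _ d =>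
    induction w using Quotient.ind with | _ w =>
    show (mkQ _ : QT lam sigE) = mkQ _
    exact congrArg mkQ (hp.p2 x d w)
  · intro a b x
    induction a using Quotient.ind with | _ a =>
    induction b using Quotient.ind with | _ b =>
    induction x using Quotient.ind with | _ x =>
    show (mkQ _ : QT lam sigE) = mkQ _
    exact congrArg mkQ (hp.p3 a b x)
  · intro x
    induction x using Quotient.ind with | _ x =>
    show (mkQ _ : QT lam sigE) = mkQ _
    exact congrArg mkQ (hp.p4 x)
  · intro a c w
    induction a using Quotient.ind with | _ a =>
    induction c using Quotient.ind with | _ c =>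
    induction w using Quotient.ind with | _ w =>
    show (mkQ _ : QT lam sigE) = mkQ _
    exact congrArg mkQ (hp.p7 a c w)
  · intro x d w
    induction x using Quotient.ind with | _ x =>
    induction d using Quotient.ind with | _ d =>
    induction w using Quotient.ind with | _ w =>
    show (mkQ _ : QT lam sigE) = mkQ _
    exact congrArg mkQ (hp.p8 x d w)

/-- correspondence between level n+1 below and level n on the quotient -/
theorem R_quot : ∀ (n : ℕ) (x y : X),
    R (fun a z => lam a z) (fun a z => sigE a z) (n+1) x y ↔
    R (fun a z => lamQ hp a z) (fun a z => sigQ hp a z) n (mkQ x) (mkQ y) := by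
  intro n
  induction n with
  | zero =>
    intro x y
    constructor
    · intro h
      exact mkQ_eq_iff.mpr ⟨Equiv.ext fun z => (h z).1, Equiv.ext fun z => (h z).2⟩
    · intro h z
      have h2 := mkQ_eq_iff.mp h
      constructor
      · show lam x z = lam y z
        rw [h2.1]
      · show sigE x z = sigE y z
        rw [h2.2]
  | succ n ih =>
    intro x y
    constructor
    · intro h ζ
      induction ζ using Quotient.ind with
      | _ z => exact ⟨(ih _ _).mp (h z).1, (ih _ _).mp (h z).2⟩
    · intro h z
      exact ⟨(ih _ _).mpr (h (mkQ z)).1, (ih _ _).mpr (h (mkQ z)).2⟩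

theorem lamCab_quot : ∀ (kk : ℕ) (x z : X),
    lamCab (lamQ hp) kk (mkQ x) (mkQ z) = mkQ (lamCab lam kk x z) := by
  intro kk
  induction kk with
  | zero => intro x z; rfl
  | succ kk ih =>
    intro x z
    show (lamQ hp (mkQ x) * lamCab (lamQ hp) kk (qMap (lamQ hp) (mkQ x))) (mkQ z) = _
    rw [Equiv.Perm.mul_apply]
    have hq : qMap (lamQ hp) (mkQ x) = mkQ (qMap lam x) := lamQ_symm_mk hp x x
    rw [hq, ih (qMap lam x) z, lamQ_mk]
    rfl

theorem iter_quot : ∀ (j : ℕ) (x z : X),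
    (⇑(sigQ hp (mkQ x)))^[j] (mkQ z) = mkQ ((⇑(sigE x))^[j] z) := by
  intro j
  induction j with
  | zero => intro x z; rfl
  | succ j ih =>
    intro x z
    rw [Function.iterate_succ_apply, Function.iterate_succ_apply, sigQ_mk, ih]

theorem Ccab (k : ℕ) : ∀ (n : ℕ) (x y : X),
    R (fun a z => lamCab (lamQ hp) k a z) (fun a z => (⇑(sigQ hp a))^[k] z) n (mkQ x) (mkQ y) →
    R (fun a z => lamCab lam k a z) (fun a z => (⇑(sigE a))^[k] z) (n+1) x y := by
  intro n
  induction n with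
  | zero =>
    intro x y h z
    have he : E1 lam sigE x y := mkQ_eq_iff.mp h
    constructor
    · show lamCab lam k x z = lamCab lam k y z
      rw [lamCab_congr hp k he]
    · show (⇑(sigE x))^[k] z = (⇑(sigE y))^[k] z
      rw [he.2]
  | succ n ih =>
    intro x y h z
    constructor
    · apply ih
      have := (h (mkQ z)).1
      simp only [lamCab_quot hp] at this
      exact this
    · apply ih
      have := (h (mkQ z)).2
      simp only [iter_quot hp] at this
      exact this

end QuotDev

theorem main3 (k : ℕ) : ∀ (n : ℕ) {Y : Type u} [Finite Y]
    (lam sigE : Y → Equiv.Perm Y) (_ : IsPack lam sigE),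
    (∀ x y, R (fun a z => lam a z) (fun a z => sigE a z) n x y) →
    ∀ x y, R (fun a z => lamCab lam k a z) (fun a z => (⇑(sigE a))^[k] z) n x y := by
  intro n
  induction n with
  | zero => intro Y _ lam sigE hp h x y; exact h x y
  | succ n ih =>
    intro Y _ lam sigE hp h x y
    have hq : ∀ (ξ η : QT lam sigE),
        R (fun a z => lamQ hp a z) (fun a z => sigQ hp a z) n ξ η := by
      intro ξ η
      induction ξ using Quotient.ind with | _ a =>
      induction η using Quotient.ind with | _ b =>
      exact (R_quot hp n a b).mp (h a b)
    have hcab := ih (lamQ hp) (sigQ hp) (packQ hp) hq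
    exact Ccab hp k n x y (hcab (mkQ x) (mkQ y))

end YBAux
namespace YBAux
open Function Equiv
variable {X : Type*}

theorem sigMap_cab (lam : X → Equiv.Perm X) (rho : X → X → X) (k : ℕ) :
    sigMap (lamCab lam k) (rhoCab lam rho k) = sigCab lam rho k := by
  funext y x
  show lamCab lam k y (rhoCab lam rho k ((lamCab lam k x).symm y) x) = _
  have e : lamCab lam k x ((lamCab lam k x).symm y) = y := Equiv.apply_symm_apply _ _
  rw [rhoCab, e, Equiv.apply_symm_apply]

end YBAux

/-- in a finite biquandle, `λ_x = λ_y` and `σ_x = σ_y` imply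
`λ_{kx} = λ_{ky}` and `σ_{kx} = σ_{ky}` for all positive `k`; consequently
retractability and having finite multipermutation level are preserved by cabling. -/
theorem cabling_preserves_retractability {X : Type*} [Finite X]
    (lam : X → Equiv.Perm X) (rho : X → X → X)
    (hbq : IsBiquandle lam rho) (k : ℕ) (hk : 0 < k) :
    (∀ x y : X, lam x = lam y → sigMap lam rho x = sigMap lam rho y →
      lamCab lam k x = lamCab lam k y ∧ sigCab lam rho k x = sigCab lam rho k y) ∧
    (Retractable lam rho → Retractable (lamCab lam k) (rhoCab lam rho k)) ∧
    (FiniteMPL lam rho → FiniteMPL (lamCab lam k) (rhoCab lam rho k)) := by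
  obtain ⟨sigE, hcoe, hp⟩ := YBAux.exists_pack hbq
  have hsig : sigMap lam rho = fun y => ⇑(sigE y) := funext fun y => (hcoe y).symm
  have part1 : ∀ x y : X, lam x = lam y → sigMap lam rho x = sigMap lam rho y →
      lamCab lam k x = lamCab lam k y ∧ sigCab lam rho k x = sigCab lam rho k y := by
    intro x y hl hs
    have he : YBAux.E1 lam sigE x y :=
      ⟨hl, Equiv.coe_fn_injective (show ⇑(sigE x) = ⇑(sigE y) by rw [hcoe, hcoe, hs])⟩
    refine ⟨YBAux.lamCab_congr hp k he, ?_⟩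
    show (sigMap lam rho x)^[k] = (sigMap lam rho y)^[k]
    rw [hs]
  refine ⟨part1, ?_, ?_⟩
  · rintro ⟨x, y, hxy, hl, hs⟩
    refine ⟨x, y, hxy, (part1 x y hl hs).1, ?_⟩
    rw [YBAux.sigMap_cab]
    exact (part1 x y hl hs).2
  · rintro ⟨n, hn⟩
    refine ⟨n, ?_⟩
    have hS : sigMap (lamCab lam k) (rhoCab lam rho k)
        = (fun (a : X) z => (⇑(sigE a))^[k] z) := by
      rw [YBAux.sigMap_cab]
      funext a z
      show (sigMap lam rho a)^[k] z = _
      rw [hsig]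
    rw [YBAux.retIter_eq_R, hS]
    apply YBAux.main3 k n lam sigE hp
    intro x y
    have := hn x y
    rw [YBAux.retIter_eq_R, hsig] at this
    exact this
end

section
/- Let (X, ◁) be a finite quandle with |X| > 1 whose structure group G(X,◁) is nilpotent and not isomorphic to ℤ. Then the associated solution (X, r_◁) with r_◁(x,y) = (y, x ◁ y) is decomposable. -/
open Function

/-!
In the structure group `G` of a quandle the relations read `x ◁ y = y⁻¹ x y`, so the conjugacy
class of a generator is invariant under `x ↦ x ◁ y`; its fibres therefore split `X` into
subsolutions, and the solution is decomposable unless all generators are conjugate. In that case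
`G` is generated by one generator `x₀` modulo `[G, G]`, which in a nilpotent group forces
`G = ⟨x₀⟩`; the degree map `G → ℤ`, sending every generator to `1`, then is an isomorphism.
-/

open Function Subgroup
open scoped commutatorElement

namespace Subgroup

variable {G : Type*} [Group G]

theorem normal_of_sup_center_eq_top {K : Subgroup G} (h : K ⊔ center G = ⊤) : K.Normal := by
  refine normalizer_eq_top_iff.mp (top_le_iff.mp (h ▸ sup_le le_normalizer ?_))
  exact (center_le_centralizer _).trans (centralizer_le_normalizer _)

theorem commutator_le_of_sup_center_eq_top {K : Subgroup G} (h : K ⊔ center G = ⊤) :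
    _root_.commutator G ≤ K :=
  have := normal_of_sup_center_eq_top h
  Normal.commutator_le_of_self_sup_commutative_eq_top h inferInstance

theorem eq_top_of_sup_commutator_eq_top [Group.IsNilpotent G] {K : Subgroup G}
    (h : K ⊔ _root_.commutator G = ⊤) : K = ⊤ := by
  suffices ∀ K : Subgroup G, K ⊔ _root_.commutator G = ⊤ → K = ⊤ from this K h
  refine Group.nilpotent_center_quotient_ind
    (P := fun H _ _ => ∀ K : Subgroup H, K ⊔ _root_.commutator H = ⊤ → K = ⊤) G ?_ ?_
  · intro H _ _ K _
    exact Subsingleton.elim _ _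
  · intro H _ _ ih K hK
    set π := QuotientGroup.mk' (center H)
    have hπ : Surjective π := QuotientGroup.mk'_surjective _
    have hmap : K.map π = ⊤ := ih _ <| by
      have := congrArg (map π) hK
      rwa [map_sup, map_commutator_eq, π.range_eq_top_of_surjective hπ, ← _root_.commutator_def,
        map_top_of_surjective π hπ] at this
    have hKZ : K ⊔ center H = ⊤ := by
      rw [← QuotientGroup.ker_mk' (center H), ← comap_map_eq, hmap, comap_top]
    rw [← hK, sup_eq_left.mpr (commutator_le_of_sup_center_eq_top hKZ)]

theorem zpowers_eq_top_of_forall_isConj [Group.IsNilpotent G] {s : Set G} (hs : closure s = ⊤)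
    {g : G} (hg : ∀ x ∈ s, IsConj g x) : zpowers g = ⊤ := by
  refine eq_top_of_sup_commutator_eq_top (top_le_iff.mp (hs ▸ closure_le _ |>.mpr ?_))
  intro x hx
  obtain ⟨c, rfl⟩ := isConj_iff.mp (hg x hx)
  have hconj : c * g * c⁻¹ = g * ⁅g⁻¹, c⁆ := by
    rw [commutatorElement_def]
    group
  rw [SetLike.mem_coe, hconj]
  exact mul_mem (mem_sup_left (mem_zpowers g))
    (mem_sup_right (commutator_mem_commutator (mem_top _) (mem_top _)))

theorem nonempty_mulEquiv_int_of_zpowers_eq_top {g : G} (hg : zpowers g = ⊤)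
    (φ : G →* Multiplicative ℤ) (hφ : φ g = Multiplicative.ofAdd 1) :
    Nonempty (G ≃* Multiplicative ℤ) := by
  have hinv : φ.comp (zpowersHom G g) = MonoidHom.id _ := MonoidHom.ext_mint (by simpa using hφ)
  have hsurj : Surjective (zpowersHom G g) :=
    MonoidHom.range_eq_top.mp ((range_zpowersHom g).trans hg)
  have hinj : Injective (zpowersHom G g) :=
    LeftInverse.injective (g := φ) fun n => DFunLike.congr_fun hinv n
  exact ⟨(MulEquiv.ofBijective _ ⟨hinj, hsurj⟩).symm⟩

end Subgroup

abbrev StructureGroup {X : Type*} (l ρ : X → X → X) : Type _ :=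
  PresentedGroup (relsOf l ρ)

namespace StructureGroup

variable {X : Type*}

theorem of_mul_of (l ρ : X → X → X) (x y : X) :
    (PresentedGroup.of x * PresentedGroup.of y : StructureGroup l ρ) =
      PresentedGroup.of (l x y) * PresentedGroup.of (ρ y x) :=
  mul_inv_eq_one.mp (PresentedGroup.one_of_mem ⟨x, y, rfl⟩)

def degree (l ρ : X → X → X) : StructureGroup l ρ →* Multiplicative ℤ :=
  PresentedGroup.toGroup (f := fun _ => Multiplicative.ofAdd 1) <| by
    rintro _ ⟨x, y, rfl⟩
    simp

theorem degree_of (l ρ : X → X → X) (x : X) :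
    degree l ρ (PresentedGroup.of x) = Multiplicative.ofAdd 1 :=
  PresentedGroup.toGroup.of _

theorem isConj_of_op (op : X → X → X) (x y : X) :
    IsConj (PresentedGroup.of x : StructureGroup (fun _ y => y) (fun y x => op x y))
      (PresentedGroup.of (op x y)) := by
  refine isConj_iff.mpr ⟨(PresentedGroup.of y)⁻¹, ?_⟩
  rw [inv_inv, mul_assoc, of_mul_of, inv_mul_cancel_left]

end StructureGroup

theorem decomposable_of_invariant {X α : Type*} (op : X → X → X) (c : X → α)
    (hc : ∀ x y, c (op x y) = c x) {x₀ x₁ : X} (hne : c x₀ ≠ c x₁) :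
    Decomposable (fun p : X × X => (p.2, op p.1 p.2)) := by
  have hsub : ∀ S : Set X, (∀ x y, x ∈ S → op x y ∈ S) →
      (fun p : X × X => (p.2, op p.1 p.2)) '' (S ×ˢ S) ⊆ S ×ˢ S := by
    rintro S hS _ ⟨⟨x, y⟩, ⟨hx, hy⟩, rfl⟩
    exact ⟨hy, hS x y hx⟩
  refine ⟨c ⁻¹' {c x₀}, (c ⁻¹' {c x₀})ᶜ, ⟨x₀, rfl⟩, ⟨x₁, hne.symm⟩, disjoint_compl_right,
    Set.union_compl_self _, hsub _ ?_, hsub _ ?_⟩ <;>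
  · intro x y
    simp [hc]

theorem quandle_nilpotent_decomposable_general {X : Type*}
    (op : X → X → X)
    (hcard : 1 < Nat.card X)
    (hnilp : Group.IsNilpotent
      (PresentedGroup (relsOf (fun _ y => y) (fun y x => op x y) : Set (FreeGroup X))))
    (hnotZ : IsEmpty
      ((PresentedGroup (relsOf (fun _ y => y) (fun y x => op x y) : Set (FreeGroup X)))
        ≃* Multiplicative ℤ)) :
    Decomposable (fun p : X × X => (p.2, op p.1 p.2)) := by
  obtain ⟨x₀⟩ : Nonempty X := (Nat.card_pos_iff.mp (by omega)).1
  let c : X → ConjClasses (StructureGroup (fun _ y => y) (fun y x => op x y)) :=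
    fun x => ConjClasses.mk (PresentedGroup.of x)
  by_cases hc : ∃ x₁, c x₀ ≠ c x₁
  · obtain ⟨x₁, hx₁⟩ := hc
    refine decomposable_of_invariant op c (fun x y => ?_) hx₁
    exact ConjClasses.mk_eq_mk_iff_isConj.mpr (StructureGroup.isConj_of_op op x y).symm
  · push Not at hc
    have hcyclic : zpowers (PresentedGroup.of x₀ : StructureGroup _ _) = ⊤ :=
      zpowers_eq_top_of_forall_isConj (PresentedGroup.closure_range_of _) <| by
        rintro _ ⟨x, rfl⟩
        exact ConjClasses.mk_eq_mk_iff_isConj.mp (hc x)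
    exact (hnotZ.false <| Classical.choice <|
      nonempty_mulEquiv_int_of_zpowers_eq_top hcyclic _ (StructureGroup.degree_of _ _ x₀)).elim

/-- a finite quandle with more than one element whose structure group is
nilpotent and not isomorphic to `ℤ` has a decomposable associated solution
`r_◁(x,y) = (y, x ◁ y)`. -/
theorem quandle_nilpotent_decomposable {X : Type*} [Finite X]
    (op : X → X → X)
    (hbij : ∀ y, Function.Bijective (fun x => op x y))
    (hsd : ∀ x y z, op (op x y) z = op (op x z) (op y z))
    (hq : ∀ x, op x x = x)
    (hcard : 1 < Nat.card X)
    (hnilp : Group.IsNilpotent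
      (PresentedGroup (relsOf (fun _ y => y) (fun y x => op x y) : Set (FreeGroup X))))
    (hnotZ : IsEmpty
      ((PresentedGroup (relsOf (fun _ y => y) (fun y x => op x y) : Set (FreeGroup X)))
        ≃* Multiplicative ℤ)) :
    Decomposable (fun p : X × X => (p.2, op p.1 p.2)) :=
  quandle_nilpotent_decomposable_general op hcard hnilp hnotZ
end
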